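/- The Zeeman topology Z induces the 3-dimensional Euclidean topology on every space axis: for every affine hyperplane H ⊆ M = ℝ⁴ all of whose nonzero direction vectors w satisfy Q(w) < 0 (a spacelike hyperplane), the subspace topology induced by Z on H coincides with the subspace topology induced on H by the standard Euclidean topology E of ℝ⁴. -/

import Mathlib

open Set Metric TopologicalSpace Topology

noncomputable section

/-- Minkowski space `M = ℝ⁴` with the Euclidean metric/topology. -/
abbrev M4 : Type := EuclideanSpace ℝ (Fin 4)

/-- The Minkowski quadratic form `Q(x) = x₀² − x₁² − x₂² − x₃²`. -/
def Q (x : M4) : ℝ := x 0 ^ 2 - x 1 ^ 2 - x 2 ^ 2 - x 3 ^ 2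

/-- Chronological order: `x ≪ y`. -/
def chron (x y : M4) : Prop := Q (y - x) > 0 ∧ x 0 < y 0

/-- Causal order: `x ≺ y`. -/
def causal (x y : M4) : Prop := Q (y - x) ≥ 0 ∧ x 0 ≤ y 0

/-- Horismos: `x → y`. -/
def horismos (x y : M4) : Prop := Q (y - x) = 0 ∧ x ≠ y ∧ x 0 < y 0

/-- The light cone `N(x) = N⁺(x) ∪ N⁻(x)`. -/
def lightCone (x : M4) : Set M4 := {y | horismos x y} ∪ {y | horismos y x}

/-- The Zeeman topology `Z`, generated by the sets `Z_ε(x) = (B_ε(x) \ N(x)) ∪ {x}`. -/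
def Zeeman : TopologicalSpace M4 :=
  TopologicalSpace.generateFrom
    {S | ∃ (x : M4) (ε : ℝ), 0 < ε ∧ S = (Metric.ball x ε \ lightCone x) ∪ {x}}

/-- The interval topology `T_R` of a relation `R`, generated by the subbasis of
complements of the sets `R⁺(x) = {y | R x y}` and `R⁻(x) = {y | R y x}`. -/
def intervalTopology (R : M4 → M4 → Prop) : TopologicalSpace M4 :=
  TopologicalSpace.generateFrom
    ({S | ∃ x : M4, S = {y | R x y}ᶜ} ∪ {S | ∃ x : M4, S = {y | R y x}ᶜ})

/-!
No two points of a spacelike hyperplane `H` are lightlike separated: `y - x` would be a nonzero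
direction of `H` with `Q = 0`. For any set `s` with this property and a vertex `x ∈ s`, the
trace of `Z_ε(x)` on `s` is the Euclidean ball; for `x ∉ s` it is the trace of the
Euclidean-open set `B_ε(x) ∩ {y | Q (y - x) ≠ 0}`. Conversely every Euclidean-open set is
Zeeman-open, being a union of the sets `Z_ε(x)` it contains.
-/

lemma continuous_Q : Continuous Q := by
  unfold Q; fun_prop

lemma Q_neg (w : M4) : Q (-w) = Q w := by simp [Q]

lemma Q_sub_comm (x y : M4) : Q (x - y) = Q (y - x) := by
  rw [← Q_neg, neg_sub]

lemma eq_zero_of_Q_eq_zero_of_apply_zero {w : M4} (hQ : Q w = 0) (h0 : w 0 = 0) : w = 0 := by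
  have hspatial : w 1 ^ 2 + w 2 ^ 2 + w 3 ^ 2 = 0 := by simp only [Q, h0] at hQ; linarith
  have h1 : w 1 = 0 := by nlinarith [sq_nonneg (w 1), sq_nonneg (w 2), sq_nonneg (w 3)]
  have h2 : w 2 = 0 := by nlinarith [sq_nonneg (w 1), sq_nonneg (w 2), sq_nonneg (w 3)]
  have h3 : w 3 = 0 := by nlinarith [sq_nonneg (w 1), sq_nonneg (w 2), sq_nonneg (w 3)]
  ext i
  fin_cases i <;> simp [h0, h1, h2, h3]

lemma mem_lightCone_iff {x y : M4} : y ∈ lightCone x ↔ Q (y - x) = 0 ∧ y ≠ x := by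
  constructor
  · rintro (⟨hQ, hne, -⟩ | ⟨hQ, hne, -⟩)
    · exact ⟨hQ, hne.symm⟩
    · exact ⟨(Q_sub_comm y x).trans hQ, hne⟩
  · rintro ⟨hQ, hne⟩
    have htime : y 0 - x 0 ≠ 0 := fun h0 =>
      hne (sub_eq_zero.mp (eq_zero_of_Q_eq_zero_of_apply_zero hQ h0))
    rcases htime.lt_or_gt with hlt | hgt
    · exact Or.inr ⟨(Q_sub_comm x y).trans hQ, hne, by linarith⟩
    · exact Or.inl ⟨hQ, hne.symm, by linarith⟩

def zeemanBall (x : M4) (ε : ℝ) : Set M4 := (ball x ε \ lightCone x) ∪ {x}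

lemma isOpen_zeemanBall (x : M4) {ε : ℝ} (hε : 0 < ε) : IsOpen[Zeeman] (zeemanBall x ε) :=
  .basic _ ⟨x, ε, hε, rfl⟩

lemma mem_zeemanBall_self (x : M4) (ε : ℝ) : x ∈ zeemanBall x ε :=
  Or.inr rfl

lemma zeemanBall_subset_ball {x : M4} {ε : ℝ} (hε : 0 < ε) : zeemanBall x ε ⊆ ball x ε :=
  union_subset sdiff_subset (singleton_subset_iff.mpr (mem_ball_self hε))

lemma zeeman_le_euclidean : Zeeman ≤ (inferInstance : TopologicalSpace M4) := by
  intro U hU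
  refine (@isOpen_iff_forall_mem_open M4 Zeeman U).mpr fun x hx => ?_
  obtain ⟨ε, hε, hball⟩ := Metric.isOpen_iff.mp hU x hx
  exact ⟨zeemanBall x ε, (zeemanBall_subset_ball hε).trans hball,
    isOpen_zeemanBall x hε, mem_zeemanBall_self x ε⟩

section Traces

variable {s : Set M4} {x : M4} {ε : ℝ}

lemma inter_zeemanBall_of_mem (hs : s.Pairwise fun a b => Q (b - a) ≠ 0) (hx : x ∈ s)
    (hε : 0 < ε) : s ∩ zeemanBall x ε = s ∩ ball x ε := by
  refine (inter_subset_inter_right s (zeemanBall_subset_ball hε)).antisymm ?_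
  rintro y ⟨hy, hball⟩
  refine ⟨hy, ?_⟩
  by_cases hyx : y = x
  · exact hyx ▸ mem_zeemanBall_self x ε
  · exact Or.inl ⟨hball, fun hcone => hs hx hy (Ne.symm hyx) (mem_lightCone_iff.mp hcone).1⟩

lemma inter_zeemanBall_of_notMem (hx : x ∉ s) :
    s ∩ zeemanBall x ε = s ∩ (ball x ε ∩ {y | Q (y - x) = 0}ᶜ) := by
  ext y
  simp only [zeemanBall, mem_inter_iff, mem_union, mem_sdiff, mem_singleton_iff, mem_compl_iff,
    mem_ofPred_eq, mem_lightCone_iff, not_and, not_not]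
  constructor
  · rintro ⟨hy, ⟨hball, hcone⟩ | rfl⟩
    · exact ⟨hy, hball, fun hQ => hx (hcone hQ ▸ hy)⟩
    · exact absurd hy hx
  · rintro ⟨hy, hball, hQ⟩
    exact ⟨hy, Or.inl ⟨hball, fun hQ' => absurd hQ' hQ⟩⟩

lemma isOpen_induced_preimage_zeemanBall (hs : s.Pairwise fun a b => Q (b - a) ≠ 0)
    (hε : 0 < ε) :
    IsOpen[induced ((↑) : s → M4) inferInstance] (((↑) : s → M4) ⁻¹' zeemanBall x ε) := by
  by_cases hx : x ∈ s
  · refine ⟨ball x ε, isOpen_ball, ?_⟩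
    rw [Subtype.preimage_coe_eq_preimage_coe_iff, inter_zeemanBall_of_mem hs hx hε]
  · have hnull : IsClosed {y : M4 | Q (y - x) = 0} :=
      isClosed_eq (continuous_Q.comp (continuous_id.sub continuous_const)) continuous_const
    refine ⟨ball x ε ∩ {y | Q (y - x) = 0}ᶜ, isOpen_ball.inter hnull.isOpen_compl, ?_⟩
    rw [Subtype.preimage_coe_eq_preimage_coe_iff, inter_zeemanBall_of_notMem hx]

theorem induced_zeeman_eq_induced_euclidean (hs : s.Pairwise fun a b => Q (b - a) ≠ 0) :
    induced ((↑) : s → M4) Zeeman = induced ((↑) : s → M4) inferInstance := by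
  refine le_antisymm (induced_mono zeeman_le_euclidean) (le_induced_generateFrom ?_)
  rintro _ ⟨x, ε, hε, rfl⟩
  exact isOpen_induced_preimage_zeemanBall hs hε

end Traces

lemma AffineSubspace.pairwise_Q_sub_ne_zero {H : AffineSubspace ℝ M4}
    (hspace : ∀ w ∈ H.direction, w ≠ 0 → Q w < 0) :
    (H : Set M4).Pairwise fun a b => Q (b - a) ≠ 0 := fun _ hx _ hy hxy =>
  (hspace _ (H.vsub_mem_direction hy hx) (sub_ne_zero.mpr hxy.symm)).ne

theorem Zeeman_induces_euclidean_on_spacelike_hyperplane_general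
    (H : AffineSubspace ℝ M4)
    (hspace : ∀ w ∈ H.direction, w ≠ 0 → Q w < 0) :
    TopologicalSpace.induced (fun p : H => (p : M4)) Zeeman =
      TopologicalSpace.induced (fun p : H => (p : M4))
        (inferInstance : TopologicalSpace M4) :=
  induced_zeeman_eq_induced_euclidean (AffineSubspace.pairwise_Q_sub_ne_zero hspace)

/-- The Zeeman topology induces the 3-dimensional Euclidean topology on every
spacelike affine hyperplane `H`. -/
theorem Zeeman_induces_euclidean_on_spacelike_hyperplane
    (H : AffineSubspace ℝ M4)
    (hdim : Module.finrank ℝ H.direction = 3)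
    (hspace : ∀ w ∈ H.direction, w ≠ 0 → Q w < 0) :
    TopologicalSpace.induced (fun p : H => (p : M4)) Zeeman =
      TopologicalSpace.induced (fun p : H => (p : M4))
        (inferInstance : TopologicalSpace M4) :=
  Zeeman_induces_euclidean_on_spacelike_hyperplane_general H hspace
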